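/- Let n ≥ 1 and let w_1, …, w_k be n×n real row stochastic matrices that are additionally strictly positive on the tridiagonal band ((w_t) i j > 0 whenever |i − j| ≤ 1). If k ≥ n − 1, then the ordered product W = w_1 w_2 ⋯ w_k is simultaneously row stochastic and entrywise strictly positive: every entry of W is positive, and each row of W sums to 1. -/

import Mathlib

/-!
A product of row stochastic matrices is row stochastic, since these form a submonoid. For
positivity, note that `(A * B) i j ≥ A i l * B l j` for nonnegative `A`, `B` and any `l`. Going
from row `i` towards column `j` one index per factor, a product of `m` nonnegative matrices
that are positive on the tridiagonal band is positive on the band `|i - j| ≤ m`; with at least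
`n - 1` factors this band is all of `Fin n × Fin n`.
-/

open Matrix

lemma Fin.exists_abs_sub_le_one_and_abs_sub_le {n m : ℕ} {i j : Fin n}
    (hij : |(i : ℤ) - j| ≤ m + 1) : ∃ l : Fin n, |(i : ℤ) - l| ≤ 1 ∧ |(l : ℤ) - j| ≤ m := by
  rw [abs_le] at hij
  rcases lt_trichotomy (i : ℕ) j with hlt | heq | hgt
  · exact ⟨⟨i + 1, by omega⟩, by simp only [abs_le]; omega⟩
  · exact ⟨i, by simp only [abs_le]; omega⟩
  · exact ⟨⟨i - 1, by omega⟩, by simp only [abs_le]; omega⟩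

section

variable {R : Type*} [Semiring R] [PartialOrder R]

lemma Matrix.list_prod_apply_nonneg [IsOrderedRing R] {ι : Type*} [Fintype ι] [DecidableEq ι]
    {L : List (Matrix ι ι R)} (hL : ∀ A ∈ L, ∀ i j, 0 ≤ A i j) (i j : ι) :
    0 ≤ L.prod i j := by
  induction L generalizing i with
  | nil => simp [one_apply, apply_ite, zero_le_one]
  | cons A L ih =>
    rw [List.prod_cons, mul_apply]
    exact Finset.sum_nonneg fun l _ =>
      mul_nonneg (hL A List.mem_cons_self i l) (ih (fun B hB => hL B (.tail A hB)) l)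

lemma Matrix.mul_apply_pos_of_nonneg [IsStrictOrderedRing R] {ι : Type*} [Fintype ι]
    {A B : Matrix ι ι R} (hA : ∀ i j, 0 ≤ A i j) (hB : ∀ i j, 0 ≤ B i j) {i l j : ι}
    (hAil : 0 < A i l) (hBlj : 0 < B l j) : 0 < (A * B) i j := by
  rw [mul_apply]
  exact Finset.sum_pos' (fun l' _ => mul_nonneg (hA i l') (hB l' j))
    ⟨l, Finset.mem_univ l, mul_pos hAil hBlj⟩

lemma Matrix.list_prod_apply_pos_of_abs_sub_le_length [IsStrictOrderedRing R] {n : ℕ}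
    {L : List (Matrix (Fin n) (Fin n) R)}
    (hL_nonneg : ∀ A ∈ L, ∀ i j, 0 ≤ A i j)
    (hL_band : ∀ A ∈ L, ∀ i j : Fin n, |(i : ℤ) - j| ≤ 1 → 0 < A i j)
    {i j : Fin n} (hij : |(i : ℤ) - j| ≤ L.length) : 0 < L.prod i j := by
  induction L generalizing i with
  | nil =>
    have hij : i = j := by rw [List.length_nil, Nat.cast_zero, abs_nonpos_iff] at hij; omega
    simp [hij]
  | cons A L ih =>
    rw [List.length_cons, Nat.cast_succ] at hij
    obtain ⟨l, hil, hlj⟩ := Fin.exists_abs_sub_le_one_and_abs_sub_le hij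
    rw [List.prod_cons]
    exact mul_apply_pos_of_nonneg (hL_nonneg A List.mem_cons_self)
      (list_prod_apply_nonneg fun B hB => hL_nonneg B (.tail A hB))
      (hL_band A List.mem_cons_self i l hil)
      (ih (fun B hB => hL_nonneg B (.tail A hB)) (fun B hB => hL_band B (.tail A hB)) hlj)

end

theorem prod_tridiagonal_row_stochastic_dense_general (n k : ℕ)
    (hk : n - 1 ≤ k) (w : Fin k → Matrix (Fin n) (Fin n) ℝ)
    (h_nonneg : ∀ t (i j : Fin n), 0 ≤ w t i j)
    (h_row : ∀ t (i : Fin n), ∑ j, w t i j = 1)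
    (h_band_pos : ∀ t (i j : Fin n), |(i : ℤ) - (j : ℤ)| ≤ 1 → 0 < w t i j) :
    (∀ i j : Fin n, 0 < (List.ofFn w).prod i j) ∧
      (∀ i : Fin n, ∑ j, (List.ofFn w).prod i j = 1) := by
  have h_stoch : ∀ A ∈ List.ofFn w, A ∈ rowStochastic ℝ (Fin n) := by
    simp only [List.forall_mem_ofFn_iff]
    exact fun t => mem_rowStochastic_iff_sum.2 ⟨h_nonneg t, h_row t⟩
  refine ⟨fun i j => ?_, sum_row_of_mem_rowStochastic (list_prod_mem h_stoch)⟩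
  refine list_prod_apply_pos_of_abs_sub_le_length
    (fun A hA => (h_stoch A hA).1) (by simpa only [List.forall_mem_ofFn_iff] using h_band_pos) ?_
  rw [List.length_ofFn, abs_le]
  omega

/-- If `n ≥ 1` and each `w t` is row stochastic (nonnegative
entries, rows summing to 1) and strictly positive on the tridiagonal band
(`w t i j > 0` whenever `|i − j| ≤ 1`), and `k ≥ n − 1`, then the ordered
product `W = w 0 * ⋯ * w (k-1)` is simultaneously entrywise strictly positive
and row stochastic: every entry of `W` is positive and each row of `W` sums
to 1. -/
theorem prod_tridiagonal_row_stochastic_dense (n k : ℕ) (hn : 1 ≤ n)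
    (hk : n - 1 ≤ k) (w : Fin k → Matrix (Fin n) (Fin n) ℝ)
    (h_nonneg : ∀ t (i j : Fin n), 0 ≤ w t i j)
    (h_row : ∀ t (i : Fin n), ∑ j, w t i j = 1)
    (h_band_pos : ∀ t (i j : Fin n), |(i : ℤ) - (j : ℤ)| ≤ 1 → 0 < w t i j) :
    (∀ i j : Fin n, 0 < (List.ofFn w).prod i j) ∧
      (∀ i : Fin n, ∑ j, (List.ofFn w).prod i j = 1) :=
  prod_tridiagonal_row_stochastic_dense_general n k hk w h_nonneg h_row h_band_pos
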